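/- (Lemma 7 of the appendix.) Let 2m+1 ≤ i ≤ n−1 and, for each j = 1, …, n, let x_j be a vector of k distinct locations of column j, with u_j the complementary vector of the remaining r−k locations of column j. Then H(Z_{x_{i−m}} | Z_{x_{i−2m:i−m−1}}, Z_{u_{i−2m:i}}) − H(Z_{x_{i−m}} | Z_{x_{1:i−m−1}}, Z_{u_{1:n}}) ≤ (n−2m−1) · r · k · log(1 + ξ²/(η(1+η))). -/

import Mathlib

open Finset

/-- Covariance matrix of the GP: kernel plus sensor noise on the diagonal. -/
noncomputable def SigmaMat {D : Type*} [DecidableEq D] (K : D → D → ℝ) (σn2 : ℝ) :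
    Matrix D D ℝ :=
  Matrix.of fun x y => K x y + if x = y then σn2 else 0

/-- Submatrix of covariances between the entries of two finsets of locations. -/
noncomputable def subMat {D : Type*} (Cov : Matrix D D ℝ) (a s : Finset D) :
    Matrix ↥a ↥s ℝ :=
  Matrix.of fun p q => Cov p.1 q.1

/-- Posterior covariance `Σ_{aa|s} = Σ_{aa} - Σ_{as} Σ_{ss}⁻¹ Σ_{sa}`. -/
noncomputable def postCov {D : Type*} [DecidableEq D] (Cov : Matrix D D ℝ) (a s : Finset D) :
    Matrix ↥a ↥a ℝ :=
  subMat Cov a a - subMat Cov a s * (subMat Cov s s)⁻¹ * subMat Cov s a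

/-- Gaussian conditional entropy `H(Z_a | Z_s) = (1/2) log((2πe)^{|a|} det Σ_{aa|s})`. -/
noncomputable def condEnt {D : Type*} [DecidableEq D] (Cov : Matrix D D ℝ) (a s : Finset D) : ℝ :=
  (1/2) * Real.log ((2 * Real.pi * Real.exp 1) ^ a.card * (postCov Cov a s).det)

/-- Gaussian joint entropy `H(Z_a)`. -/
noncomputable def ent {D : Type*} [DecidableEq D] (Cov : Matrix D D ℝ) (a : Finset D) : ℝ :=
  condEnt Cov a ∅

/-- Mutual information `I(Z_a ; Z_b) = H(Z_a) - H(Z_a | Z_b)`. -/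
noncomputable def mutInf {D : Type*} [DecidableEq D] (Cov : Matrix D D ℝ) (a b : Finset D) : ℝ :=
  ent Cov a - condEnt Cov a b

/-- Conditional mutual information `I(Z_a ; Z_b | Z_s) = H(Z_a | Z_s) - H(Z_a | Z_s, Z_b)`. -/
noncomputable def condMutInf {D : Type*} [DecidableEq D] (Cov : Matrix D D ℝ)
    (a b s : Finset D) : ℝ :=
  condEnt Cov a s - condEnt Cov a (s ∪ b)

/-- Posterior variance `Σ_{yy|A}` of a single location `y`. -/
noncomputable def postVar {D : Type*} [DecidableEq D] (Cov : Matrix D D ℝ) (y : D)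
    (A : Finset D) : ℝ :=
  postCov Cov {y} A ⟨y, Finset.mem_singleton_self y⟩ ⟨y, Finset.mem_singleton_self y⟩

/-- Concatenation `x_{i:j}` of the column selections from column `i` to column `j`. -/
def seg {D : Type*} [DecidableEq D] (x : ℕ → Finset D) (i j : ℕ) : Finset D :=
  (Finset.Icc i j).biUnion x

/-- The set of the `r` locations of column `i`. -/
def column {D : Type*} [Fintype D] (col : D → ℕ) (i : ℕ) : Finset D :=
  Finset.univ.filter (fun p => col p = i)

/-- The complementary vector `u_i` of unobserved locations of column `i` for a path `x`. -/
def ucomp {D : Type*} [Fintype D] [DecidableEq D] (col : D → ℕ) (x : ℕ → Finset D) :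
    ℕ → Finset D :=
  fun i => column col i \ x i

/-- A path selects, in every column `i = 1,…,n`, a vector of `k` distinct locations of
column `i`. -/
def IsPath {D : Type*} [Fintype D] (col : D → ℕ) (n k : ℕ) (x : ℕ → Finset D) : Prop :=
  ∀ i, 1 ≤ i → i ≤ n → x i ⊆ column col i ∧ (x i).card = k

/-!
Let `A ⊆ B` be the two conditioning sets and `W := B \ A`. Every location of `W` lies at least
`m + 1` columns away from column `i - m`, and there are at most `(n - 2m - 1) r` of them. The
entropy difference is the conditional mutual information `I(x_{i-m}; W | A)`; the chain rule and
the symmetry of mutual information split it into `|W| · k` terms `I(w; q | C)` between a single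
far location `w` and a single location `q` of column `i - m`. Each term is
`(1/2) log (Σ_{ww|C} / Σ_{ww|C,q})`: submodularity bounds the variance reduction by
`K(w,q)² / (σs² + σn²) ≤ σs⁴ ξ² / (σs² + σn²)`, and the noise keeps the posterior variance above
`σn²`, so each term is at most `(1/2) log (1 + ξ² / (η (1 + η)))`.
-/

open Matrix

section PosteriorCovariance

variable {D : Type*} {M : Matrix D D ℝ}

theorem subMat_posDef (hM : M.PosDef) (s : Finset D) : (subMat M s s).PosDef :=
  hM.submatrix Subtype.val_injective

theorem subMat_conjTranspose (hM : M.IsHermitian) (a s : Finset D) :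
    (subMat M a s)ᴴ = subMat M s a := by
  ext j i
  exact hM.apply j.1 i.1

variable [DecidableEq D]

theorem subMat_union_submatrix_eq_fromBlocks {s a : Finset D} (h : Disjoint s a) :
    (subMat M (s ∪ a) (s ∪ a)).submatrix (Equiv.Finset.union s a h) (Equiv.Finset.union s a h) =
      fromBlocks (subMat M s s) (subMat M s a) (subMat M a s) (subMat M a a) := by
  ext (i | i) (j | j) <;> rfl

theorem det_subMat_union {s a : Finset D} (hs : IsUnit (subMat M s s).det) (h : Disjoint s a) :
    (subMat M (s ∪ a) (s ∪ a)).det = (subMat M s s).det * (postCov M a s).det := by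
  let _ := invertibleOfIsUnitDet _ hs
  rw [← det_submatrix_equiv_self (Equiv.Finset.union s a h), subMat_union_submatrix_eq_fromBlocks h,
    det_fromBlocks₁₁, invOf_eq_nonsing_inv]
  rfl

theorem det_postCov_pos (hM : M.PosDef) {s a : Finset D} (h : Disjoint s a) :
    0 < (postCov M a s).det := by
  have hs := (subMat_posDef hM s).det_pos
  have hsa := (subMat_posDef hM (s ∪ a)).det_pos
  rw [det_subMat_union hs.ne'.isUnit h] at hsa
  exact pos_of_mul_pos_right hsa hs.le

theorem postCov_posSemidef (hM : M.PosSemidef) {s a : Finset D} (hs : (subMat M s s).PosDef)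
    (h : Disjoint s a) : (postCov M a s).PosSemidef := by
  let _ := invertibleOfIsUnitDet _ hs.det_pos.ne'.isUnit
  have hblocks : (fromBlocks (subMat M s s) (subMat M s a) (subMat M s a)ᴴ
      (subMat M a a)).PosSemidef := by
    rw [subMat_conjTranspose hM.isHermitian, ← subMat_union_submatrix_eq_fromBlocks h]
    exact (hM.submatrix (Subtype.val : ↥(s ∪ a) → D)).submatrix _
  have hschur := (PosDef.fromBlocks₁₁ _ _ hs).mp hblocks
  rwa [subMat_conjTranspose hM.isHermitian] at hschur

theorem det_postCov_singleton (p : D) (C : Finset D) :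
    (postCov M {p} C).det = postVar M p C :=
  det_unique _

theorem postVar_pos (hM : M.PosDef) {p : D} {C : Finset D} (hp : p ∉ C) :
    0 < postVar M p C := by
  rw [← det_postCov_singleton]
  exact det_postCov_pos hM (Finset.disjoint_singleton_right.mpr hp)

theorem postVar_nonneg (hM : M.PosSemidef) {p : D} {C : Finset D} (hC : (subMat M C C).PosDef)
    (hp : p ∉ C) : 0 ≤ postVar M p C :=
  (postCov_posSemidef hM hC (Finset.disjoint_singleton_right.mpr hp)).diag_nonneg

theorem postVar_empty (p : D) : postVar M p ∅ = M p p := by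
  simp [postVar, postCov, subMat, mul_apply]

theorem postVar_singleton (p q : D) :
    postVar M p {q} = M p p - M p q * (M q q)⁻¹ * M q p := by
  simp [postVar, postCov, subMat, mul_apply]

theorem subMat_add_single_of_notMem_left {p : D} {s t : Finset D} (hp : p ∉ s) (δ : ℝ) :
    subMat (M + single p p δ) s t = subMat M s t := by
  ext i j
  simp [subMat, single_apply_of_row_ne (fun h : p = i.1 => hp (h ▸ i.2))]

theorem subMat_add_single_of_notMem_right {p : D} {s t : Finset D} (hp : p ∉ t) (δ : ℝ) :
    subMat (M + single p p δ) s t = subMat M s t := by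
  ext i j
  simp [subMat, single_apply_of_col_ne _ _ (fun h : p = j.1 => hp (h ▸ j.2))]

theorem postVar_add_single {p : D} {C : Finset D} (hp : p ∉ C) (δ : ℝ) :
    postVar (M + single p p δ) p C = postVar M p C + δ := by
  simp only [postVar, postCov, subMat_add_single_of_notMem_left hp,
    subMat_add_single_of_notMem_right hp]
  simp only [subMat, Matrix.add_apply, Matrix.sub_apply, of_apply, single_apply_same]
  ring

end PosteriorCovariance

section Entropy

variable {D : Type*} [DecidableEq D] {M : Matrix D D ℝ}

theorem condEnt_singleton (p : D) (C : Finset D) :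
    condEnt M {p} C = 1 / 2 * Real.log (2 * Real.pi * Real.exp 1 * postVar M p C) := by
  rw [condEnt, Finset.card_singleton, pow_one, det_postCov_singleton]

theorem condEnt_eq_log_det (hM : M.PosDef) {b s : Finset D} (h : Disjoint s b) :
    condEnt M b s = 1 / 2 * (b.card * Real.log (2 * Real.pi * Real.exp 1) +
      (Real.log (subMat M (s ∪ b) (s ∪ b)).det - Real.log (subMat M s s).det)) := by
  have hs := (subMat_posDef hM s).det_pos
  have hpost := det_postCov_pos hM h
  rw [condEnt, det_subMat_union hs.ne'.isUnit h, Real.log_mul (by positivity) hpost.ne',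
    Real.log_mul hs.ne' hpost.ne', Real.log_pow]
  ring

theorem condMutInf_comm (hM : M.PosDef) {a b s : Finset D} (hab : Disjoint a b)
    (hsa : Disjoint s a) (hsb : Disjoint s b) :
    condMutInf M a b s = condMutInf M b a s := by
  rw [condMutInf, condMutInf, condEnt_eq_log_det hM hsa, condEnt_eq_log_det hM hsb,
    condEnt_eq_log_det hM (Finset.disjoint_union_left.mpr ⟨hsa, hab.symm⟩),
    condEnt_eq_log_det hM (Finset.disjoint_union_left.mpr ⟨hsb, hab⟩),
    Finset.union_right_comm s b a]
  ring

theorem condMutInf_union (a b c s : Finset D) :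
    condMutInf M a (b ∪ c) s = condMutInf M a b s + condMutInf M a c (s ∪ b) := by
  rw [condMutInf, condMutInf, condMutInf, Finset.union_assoc]
  ring

theorem condMutInf_le_card_mul {a W C : Finset D} {c : ℝ} (hCW : Disjoint C W)
    (hstep : ∀ C', C ⊆ C' → C' ⊆ C ∪ W → ∀ q ∈ W, q ∉ C' → condMutInf M a {q} C' ≤ c) :
    condMutInf M a W C ≤ W.card * c := by
  induction W using Finset.induction_on generalizing C with
  | empty => simp [condMutInf]
  | @insert q W hqW ih =>
    have hqC : q ∉ C := Finset.disjoint_right.mp hCW (Finset.mem_insert_self q W)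
    have hCq : C ∪ {q} ∪ W = C ∪ insert q W := by
      rw [Finset.union_assoc, ← Finset.insert_eq]
    have hfirst := hstep C subset_rfl Finset.subset_union_left q (Finset.mem_insert_self q W) hqC
    have hrest := ih (C := C ∪ {q})
      (Finset.disjoint_union_left.mpr
        ⟨hCW.mono_right (Finset.subset_insert q W), Finset.disjoint_singleton_left.mpr hqW⟩)
      fun C' hC' hC'W q' hq' hq'C' => hstep C' (Finset.subset_union_left.trans hC')
        (hCq ▸ hC'W) q' (Finset.mem_insert_of_mem hq') hq'C'
    rw [Finset.card_insert_of_notMem hqW, Finset.insert_eq, condMutInf_union]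
    push_cast
    linarith

theorem condMutInf_le_card_mul_card (hM : M.PosDef) {a W C : Finset D} {c : ℝ}
    (hCa : Disjoint C a) (hCW : Disjoint C W) (hWa : Disjoint W a)
    (hpair : ∀ p ∈ W, ∀ q ∈ a, p ≠ q → ∀ C', p ∉ C' → q ∉ C' → condMutInf M {p} {q} C' ≤ c) :
    condMutInf M a W C ≤ W.card * (a.card * c) := by
  refine condMutInf_le_card_mul hCW fun C' hCC' hC'W p hp hpC' => ?_
  have hpa : p ∉ a := Finset.disjoint_left.mp hWa hp
  have hC'a : Disjoint C' a :=
    (Finset.disjoint_union_left.mpr ⟨hCa, hWa⟩).mono_left hC'W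
  rw [condMutInf_comm hM (Finset.disjoint_singleton_right.mpr hpa) hC'a
    (Finset.disjoint_singleton_right.mpr hpC')]
  refine condMutInf_le_card_mul hC'a fun C'' _ hC''a q hq hqC'' => ?_
  refine hpair p hp q hq (fun h => hpa (h ▸ hq)) C'' (fun hpC'' => ?_) hqC''
  rcases Finset.mem_union.mp (hC''a hpC'') with h | h
  exacts [hpC' h, hpa h]

theorem condMutInf_singleton_eq_log_div (hM : M.PosDef)
    {p q : D} {C : Finset D} (hp : p ∉ C) (hpq : p ≠ q) :
    condMutInf M {p} {q} C = 1 / 2 * Real.log (postVar M p C / postVar M p (insert q C)) := by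
  have hpq' : p ∉ insert q C := by simp [hp, hpq]
  have hc : (0 : ℝ) < 2 * Real.pi * Real.exp 1 := by positivity
  rw [condMutInf, Finset.union_singleton, condEnt_singleton, condEnt_singleton,
    Real.log_mul hc.ne' (postVar_pos hM hp).ne', Real.log_mul hc.ne' (postVar_pos hM hpq').ne',
    Real.log_div (postVar_pos hM hp).ne' (postVar_pos hM hpq').ne']
  ring

end Entropy

section GaussianProcess

variable {D : Type*} [DecidableEq D] {K : D → D → ℝ} {σs2 σn2 ξ : ℝ}

theorem SigmaMat_eq (K : D → D → ℝ) (σn2 : ℝ) :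
    SigmaMat K σn2 = of K + diagonal fun _ => σn2 := by
  ext x y
  by_cases h : x = y <;> simp [SigmaMat, h]

theorem SigmaMat_posDef (hK : (of K).PosSemidef) (hn : 0 < σn2) :
    (SigmaMat K σn2).PosDef := by
  rw [SigmaMat_eq]
  exact PosDef.posSemidef_add hK (PosDef.diagonal fun _ => hn)

/-- Split `Σ = N + σn2 E_pp` with `N` positive semidefinite and agreeing with `Σ` off the entry
`(p, p)`; then `Σ_{pp|C} = N_{pp|C} + σn2`. -/
theorem le_postVar_SigmaMat (hK : (of K).PosSemidef) (hn : 0 < σn2) {p : D}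
    {C : Finset D} (hp : p ∉ C) : σn2 ≤ postVar (SigmaMat K σn2) p C := by
  set N : Matrix D D ℝ := of K + diagonal (Function.update (fun _ => σn2) p 0)
  have hsplit : SigmaMat K σn2 = N + single p p σn2 := by
    ext x y
    by_cases hxy : x = y
    · subst hxy
      by_cases hxp : x = p
      · subst hxp; simp [N, SigmaMat]
      · simp [N, SigmaMat, hxp, single_apply_of_row_ne (Ne.symm hxp)]
    · have : single p p σn2 x y = 0 := single_apply_of_ne _ _ _ _ _ fun h => hxy (h.1 ▸ h.2)
      simp [N, SigmaMat, hxy, this]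
  have hN : N.PosSemidef :=
    PosSemidef.add hK (PosSemidef.diagonal fun x => by
      by_cases hx : x = p <;> simp [hx, hn.le])
  have hNC : (subMat N C C).PosDef := by
    rw [← subMat_add_single_of_notMem_left hp σn2, ← hsplit]
    exact subMat_posDef (SigmaMat_posDef hK hn) C
  rw [hsplit, postVar_add_single hp]
  linarith [postVar_nonneg hN hNC hp]

theorem postVar_empty_sub_postVar_singleton (hK : (of K).IsHermitian)
    (hKdiag : ∀ p, K p p = σs2) {p q : D} (hpq : p ≠ q) :
    postVar (SigmaMat K σn2) p ∅ - postVar (SigmaMat K σn2) p {q} = K p q ^ 2 / (σs2 + σn2) := by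
  have hKqp : K q p = K p q := hK.apply p q
  simp only [postVar_empty, postVar_singleton, SigmaMat, of_apply, hKdiag, if_pos, if_neg hpq,
    if_neg (Ne.symm hpq), add_zero, hKqp, sub_sub_cancel]
  ring

theorem condMutInf_SigmaMat_singleton_le (hs : 0 < σs2) (hn : 0 < σn2)
    (hK : (of K).PosSemidef) (hKdiag : ∀ p, K p p = σs2) {p q : D} {C : Finset D}
    (hp : p ∉ C) (hpq : p ≠ q)
    (hsub : postVar (SigmaMat K σn2) p C - postVar (SigmaMat K σn2) p (insert q C)
      ≤ postVar (SigmaMat K σn2) p ∅ - postVar (SigmaMat K σn2) p {q})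
    (hKpq : |K p q| ≤ σs2 * ξ) :
    condMutInf (SigmaMat K σn2) {p} {q} C
      ≤ 1 / 2 * Real.log (1 + ξ ^ 2 / ((σn2 / σs2) * (1 + σn2 / σs2))) := by
  set v₁ := postVar (SigmaMat K σn2) p C
  set v₂ := postVar (SigmaMat K σn2) p (insert q C)
  have hv₁ : 0 < v₁ := postVar_pos (SigmaMat_posDef hK hn) hp
  have hv₂ : σn2 ≤ v₂ := le_postVar_SigmaMat hK hn (by simp [hp, hpq])
  have hred : v₁ - v₂ ≤ (σs2 * ξ) ^ 2 / (σs2 + σn2) := by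
    rw [postVar_empty_sub_postVar_singleton hK.isHermitian hKdiag hpq] at hsub
    refine hsub.trans (div_le_div_of_nonneg_right ?_ (by positivity))
    exact sq_le_sq' (neg_le_of_abs_le hKpq) (le_of_abs_le hKpq)
  have hratio : v₁ / v₂ ≤ 1 + ξ ^ 2 / ((σn2 / σs2) * (1 + σn2 / σs2)) := by
    have hη : ξ ^ 2 / ((σn2 / σs2) * (1 + σn2 / σs2)) = (σs2 * ξ) ^ 2 / (σs2 + σn2) / σn2 := by
      field_simp
    rw [hη, div_le_iff₀ (hn.trans_le hv₂), add_mul, one_mul]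
    have hX : (σs2 * ξ) ^ 2 / (σs2 + σn2) = (σs2 * ξ) ^ 2 / (σs2 + σn2) / σn2 * σn2 :=
      (div_mul_cancel₀ _ hn.ne').symm
    have hX₀ : 0 ≤ (σs2 * ξ) ^ 2 / (σs2 + σn2) / σn2 := by positivity
    linarith [mul_le_mul_of_nonneg_left hv₂ hX₀]
  rw [condMutInf_singleton_eq_log_div (SigmaMat_posDef hK hn) hp hpq]
  gcongr
  exact div_pos hv₁ (hn.trans_le hv₂)

theorem condMutInf_SigmaMat_le (hs : 0 < σs2) (hn : 0 < σn2) (hK : (of K).PosSemidef)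
    (hKdiag : ∀ p, K p p = σs2)
    (hsub : ∀ (p q : D) (A : Finset D), p ∉ A → q ∉ A → p ≠ q →
      postVar (SigmaMat K σn2) p A - postVar (SigmaMat K σn2) p (insert q A)
        ≤ postVar (SigmaMat K σn2) p ∅ - postVar (SigmaMat K σn2) p {q})
    {a W C : Finset D} (hCa : Disjoint C a) (hCW : Disjoint C W) (hWa : Disjoint W a)
    (hfar : ∀ p ∈ W, ∀ q ∈ a, |K p q| ≤ σs2 * ξ) :
    condMutInf (SigmaMat K σn2) a W C
      ≤ W.card * (a.card * (1 / 2 * Real.log (1 + ξ ^ 2 / ((σn2 / σs2) * (1 + σn2 / σs2))))) :=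
  condMutInf_le_card_mul_card (SigmaMat_posDef hK hn) hCa hCW hWa
    fun p hp q hq hpq C hpC hqC => condMutInf_SigmaMat_singleton_le hs hn hK hKdiag hpC hpq
      (hsub p q C hpC hqC hpq) (hfar p hp q hq)

end GaussianProcess

section Columns

variable {D : Type*} {col : D → ℕ}

theorem mem_seg_iff [DecidableEq D] {y : ℕ → Finset D} {lo hi : ℕ}
    (hy : ∀ j ∈ Finset.Icc lo hi, ∀ p ∈ y j, col p = j) {p : D} :
    p ∈ seg y lo hi ↔ lo ≤ col p ∧ col p ≤ hi ∧ p ∈ y (col p) := by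
  constructor
  · intro hp
    obtain ⟨j, hj, hpj⟩ := Finset.mem_biUnion.mp hp
    obtain rfl := hy j hj p hpj
    exact ⟨(Finset.mem_Icc.mp hj).1, (Finset.mem_Icc.mp hj).2, hpj⟩
  · rintro ⟨hlo, hhi, hp⟩
    exact Finset.mem_biUnion.mpr ⟨col p, Finset.mem_Icc.mpr ⟨hlo, hhi⟩, hp⟩

variable [Fintype D] {n k : ℕ} {x : ℕ → Finset D}

theorem col_eq_of_mem_path (hx : IsPath col n k x) {j : ℕ} (hj1 : 1 ≤ j) (hjn : j ≤ n) {p : D}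
    (hp : p ∈ x j) : col p = j := by
  simpa [column] using (hx j hj1 hjn).1 hp

variable [DecidableEq D]

theorem mem_seg_path_iff (hx : IsPath col n k x) {lo hi : ℕ} (hlo : 1 ≤ lo) (hhi : hi ≤ n)
    {p : D} : p ∈ seg x lo hi ↔ lo ≤ col p ∧ col p ≤ hi ∧ p ∈ x (col p) :=
  mem_seg_iff fun _ hj _ =>
    col_eq_of_mem_path hx (hlo.trans (Finset.mem_Icc.mp hj).1) ((Finset.mem_Icc.mp hj).2.trans hhi)

theorem mem_seg_ucomp_iff {lo hi : ℕ} {p : D} :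
    p ∈ seg (ucomp col x) lo hi ↔ lo ≤ col p ∧ col p ≤ hi ∧ p ∉ x (col p) := by
  rw [mem_seg_iff fun j _ p hp => by simpa [ucomp, column] using (Finset.mem_sdiff.mp hp).1]
  simp [ucomp, column]

theorem disjoint_path_seg_union_seg_ucomp (hx : IsPath col n k x) {j : ℕ} (hj1 : 1 ≤ j)
    (hjn : j ≤ n) : Disjoint (x j) (seg x 1 (j - 1) ∪ seg (ucomp col x) 1 n) := by
  refine Finset.disjoint_left.mpr fun q hq hqs => ?_
  rw [Finset.mem_union, mem_seg_path_iff hx le_rfl (by omega), mem_seg_ucomp_iff,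
    col_eq_of_mem_path hx hj1 hjn hq] at hqs
  rcases hqs with h | h
  · omega
  · exact h.2.2 hq

theorem col_mem_of_mem_sdiff (hx : IsPath col n k x) {lo j hi : ℕ} (hlo : 1 ≤ lo) (hjn : j ≤ n)
    {p : D} (hp : p ∈ (seg x 1 (j - 1) ∪ seg (ucomp col x) 1 n) \
      (seg x lo (j - 1) ∪ seg (ucomp col x) lo hi)) :
    col p ∈ Finset.Icc 1 n \ Finset.Icc lo hi := by
  simp only [Finset.mem_sdiff, Finset.mem_union, mem_seg_path_iff hx le_rfl (by omega : j - 1 ≤ n),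
    mem_seg_path_iff hx hlo (by omega : j - 1 ≤ n), mem_seg_ucomp_iff, Finset.mem_Icc] at hp ⊢
  by_cases h : p ∈ x (col p) <;> simp only [h, and_true, and_false, not_true, not_false_eq_true,
    or_false, false_or] at hp <;> omega

theorem card_le_card_mul_of_col_mem {W : Finset D} {J : Finset ℕ} {r : ℕ}
    (hJ : ∀ j ∈ J, (column col j).card = r) (hW : ∀ p ∈ W, col p ∈ J) : W.card ≤ J.card * r :=
  (Finset.card_le_card fun p hp => Finset.mem_biUnion.mpr ⟨col p, hW p hp, by simp [column]⟩).trans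
    (Finset.card_biUnion_le_card_mul _ _ _ fun j hj => (hJ j hj).le)

theorem card_le_of_col_mem_sdiff {r : ℕ}
    (hcolcard : ∀ j : ℕ, 1 ≤ j → j ≤ n → (column col j).card = r) {W : Finset D} {lo hi : ℕ}
    (hlo : 1 ≤ lo) (hhi : hi ≤ n) (hW : ∀ p ∈ W, col p ∈ Finset.Icc 1 n \ Finset.Icc lo hi) :
    W.card ≤ (n - (hi + 1 - lo)) * r := by
  refine (card_le_card_mul_of_col_mem (r := r) (fun j hj => ?_) hW).trans_eq ?_
  · obtain ⟨hj1, hjn⟩ := Finset.mem_Icc.mp (Finset.mem_sdiff.mp hj).1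
    exact hcolcard j hj1 hjn
  · rw [Finset.card_sdiff_of_subset (Finset.Icc_subset_Icc hlo hhi), Nat.card_Icc, Nat.card_Icc,
      Nat.add_sub_cancel]

end Columns

theorem lemma7_markov_conditional_entropy_error_general
    {D : Type*} [Fintype D] [DecidableEq D]
    (r n k m : ℕ) (col : D → ℕ)
    (K : D → D → ℝ) (σs2 σn2 ξ : ℝ)
    (hs : 0 < σs2) (hn : 0 < σn2)
    (hKpsd : (Matrix.of K).PosSemidef)
    (hKdiag : ∀ p : D, K p p = σs2)
    (hcolcard : ∀ i : ℕ, 1 ≤ i → i ≤ n → (column col i).card = r)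
    (hdecay : ∀ p q : D, (m : ℤ) + 1 ≤ |(col p : ℤ) - (col q : ℤ)| → |K p q| ≤ σs2 * ξ)
    (hsub : ∀ (p q : D) (A : Finset D), p ∉ A → q ∉ A → p ≠ q →
      postVar (SigmaMat K σn2) p A - postVar (SigmaMat K σn2) p (insert q A)
        ≤ postVar (SigmaMat K σn2) p ∅ - postVar (SigmaMat K σn2) p {q})
    (i : ℕ) (hi1 : 2 * m + 1 ≤ i) (hi2 : i ≤ n - 1)
    (x : ℕ → Finset D)
    (hx : ∀ j : ℕ, 1 ≤ j → j ≤ n → x j ⊆ column col j ∧ (x j).card = k) :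
    condEnt (SigmaMat K σn2) (x (i - m))
        (seg x (i - 2 * m) (i - m - 1) ∪ seg (ucomp col x) (i - 2 * m) i)
        - condEnt (SigmaMat K σn2) (x (i - m))
            (seg x 1 (i - m - 1) ∪ seg (ucomp col x) 1 n)
      ≤ ((n : ℝ) - 2 * (m : ℝ) - 1) * (r : ℝ) * (k : ℝ) * Real.log (1 + ξ ^ 2 / ((σn2 / σs2) * (1 + σn2 / σs2))) := by
  set A := seg x (i - 2 * m) (i - m - 1) ∪ seg (ucomp col x) (i - 2 * m) i
  set B := seg x 1 (i - m - 1) ∪ seg (ucomp col x) 1 n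
  have hAB : A ⊆ B := Finset.union_subset_union
    (Finset.biUnion_subset_biUnion_of_subset_left _ (Finset.Icc_subset_Icc (by omega) le_rfl))
    (Finset.biUnion_subset_biUnion_of_subset_left _ (Finset.Icc_subset_Icc (by omega) (by omega)))
  have haB : Disjoint (x (i - m)) B := disjoint_path_seg_union_seg_ucomp hx (by omega) (by omega)
  have hcolW (p) (hp : p ∈ B \ A) : col p ∈ Finset.Icc 1 n \ Finset.Icc (i - 2 * m) i :=
    col_mem_of_mem_sdiff hx (by omega) (by omega) hp
  have hfar : ∀ p ∈ B \ A, ∀ q ∈ x (i - m), |K p q| ≤ σs2 * ξ := fun p hp q hq => by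
    have hq := col_eq_of_mem_path hx (by omega) (by omega) hq
    have hp := Finset.mem_sdiff.mp (hcolW p hp)
    simp only [Finset.mem_Icc] at hp
    exact hdecay p q (le_abs.mpr (by omega))
  have hI := condMutInf_SigmaMat_le hs hn hKpsd hKdiag hsub (haB.mono_right hAB).symm
    Finset.disjoint_sdiff (haB.mono_right Finset.sdiff_subset).symm hfar
  have hcard : ((B \ A).card : ℝ) ≤ (n - 2 * m - 1) * r := by
    have h := card_le_of_col_mem_sdiff hcolcard (by omega) (by omega) hcolW
    rw [show n - (i + 1 - (i - 2 * m)) = n - (2 * m + 1) by omega] at h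
    calc ((B \ A).card : ℝ) ≤ ((n - (2 * m + 1)) * r : ℕ) := by exact_mod_cast h
      _ = (n - 2 * m - 1) * r := by push_cast [Nat.cast_sub (show 2 * m + 1 ≤ n by omega)]; ring
  have hL : 0 ≤ Real.log (1 + ξ ^ 2 / ((σn2 / σs2) * (1 + σn2 / σs2))) :=
    Real.log_nonneg (le_add_of_nonneg_right (by positivity))
  rw [condMutInf, Finset.union_sdiff_of_subset hAB, (hx (i - m) (by omega) (by omega)).2] at hI
  nlinarith [mul_nonneg (mul_nonneg ((Nat.cast_nonneg _).trans hcard) (Nat.cast_nonneg k)) hL,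
    mul_le_mul_of_nonneg_right hcard (mul_nonneg (Nat.cast_nonneg k) hL)]

/-- **Lemma 7 of the appendix.** -/
theorem lemma7_markov_conditional_entropy_error
    {D : Type*} [Fintype D] [DecidableEq D]
    (r n k m : ℕ) (col : D → ℕ)
    (K : D → D → ℝ) (σs2 σn2 l1 ξ : ℝ)
    (hr : 1 ≤ r) (hk1 : 1 ≤ k) (hkr : k ≤ r) (hm : 1 ≤ m)
    (hs : 0 < σs2) (hn : 0 < σn2) (hl1 : 0 < l1)
    (hξ : ξ = Real.exp (-((m : ℝ) + 1) ^ 2 / (2 * l1 ^ 2)))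
    (hKsymm : ∀ p q : D, K p q = K q p)
    (hKpsd : (Matrix.of K).PosSemidef)
    (hKdiag : ∀ p : D, K p p = σs2)
    (hcol : ∀ p : D, 1 ≤ col p ∧ col p ≤ n)
    (hcolcard : ∀ i : ℕ, 1 ≤ i → i ≤ n → (column col i).card = r)
    (hdecay : ∀ p q : D, (m : ℤ) + 1 ≤ |(col p : ℤ) - (col q : ℤ)| → |K p q| ≤ σs2 * ξ)
    (hsub : ∀ (p q : D) (A : Finset D), p ∉ A → q ∉ A → p ≠ q →
      postVar (SigmaMat K σn2) p A - postVar (SigmaMat K σn2) p (insert q A)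
        ≤ postVar (SigmaMat K σn2) p ∅ - postVar (SigmaMat K σn2) p {q})
    (i : ℕ) (hi1 : 2 * m + 1 ≤ i) (hi2 : i ≤ n - 1)
    (x : ℕ → Finset D)
    (hx : ∀ j : ℕ, 1 ≤ j → j ≤ n → x j ⊆ column col j ∧ (x j).card = k) :
    condEnt (SigmaMat K σn2) (x (i - m))
        (seg x (i - 2 * m) (i - m - 1) ∪ seg (ucomp col x) (i - 2 * m) i)
        - condEnt (SigmaMat K σn2) (x (i - m))
            (seg x 1 (i - m - 1) ∪ seg (ucomp col x) 1 n)
      ≤ ((n : ℝ) - 2 * (m : ℝ) - 1) * (r : ℝ) * (k : ℝ) * Real.log (1 + ξ ^ 2 / ((σn2 / σs2) * (1 + σn2 / σs2))) :=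
  lemma7_markov_conditional_entropy_error_general r n k m col K σs2 σn2 ξ hs hn hKpsd hKdiag
    hcolcard hdecay hsub i hi1 hi2 x hx
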